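/- Let E : [1,∞) → [0,∞) be nondecreasing with E(R) ≤ C R^α for all R ≥ 1 (some α, C > 0), and suppose for every η > 0 there is R₀ with E(R) ≤ η·E(2R) for all R ≥ R₀. If moreover for each large R, E(R) ≤ C^ℓ κ^{N(ℓ)} E(2^ℓ R) with κ ∈ (0,1) and N(ℓ)/ℓ → ∞, then E(R) = 0 for all sufficiently large R, hence for all R. -/

import Mathlib

open Real Filter Topology

/-!
Fix `R ≥ R₁`. Feeding the polynomial growth bound into the iterated estimate gives
`E R ≤ (C 2^α)^ℓ κ^{N ℓ} · C R^α` for every `ℓ`. Since `N ℓ` grows superlinearly and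
`κ < 1`, the factor `κ^{N ℓ}` beats any geometric growth, so the right-hand side tends
to `0` and `E R = 0`. Monotonicity then propagates this to all `R > 0`.
-/

theorem tendsto_pow_mul_rpow_of_tendsto_div_atTop {A κ : ℝ} (hA : 0 < A) (hκ₀ : 0 < κ)
    (hκ₁ : κ < 1) {N : ℕ → ℝ} (hN : Tendsto (fun ℓ : ℕ => N ℓ / ℓ) atTop atTop) :
    Tendsto (fun ℓ : ℕ => A ^ ℓ * κ ^ N ℓ) atTop (𝓝 0) := by
  have hexponent :
      Tendsto (fun ℓ : ℕ => (ℓ : ℝ) * (log A + N ℓ / ℓ * log κ)) atTop atBot :=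
    tendsto_natCast_atTop_atTop.atTop_mul_atBot₀ <|
      tendsto_atBot_add_const_left _ _ <| hN.atTop_mul_const_of_neg (log_neg hκ₀ hκ₁)
  refine (tendsto_exp_atBot.comp hexponent).congr' ?_
  filter_upwards [eventually_ge_atTop 1] with ℓ hℓ
  have hℓ₀ : (ℓ : ℝ) ≠ 0 := by positivity
  rw [Function.comp_apply, mul_add, ← mul_assoc, mul_div_cancel₀ _ hℓ₀, exp_add,
    ← rpow_natCast, rpow_def_of_pos hA, rpow_def_of_pos hκ₀, mul_comm (log A),
    mul_comm (log κ)]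

theorem stmt_8_general (E : ℝ → ℝ)
    (hnonneg : ∀ R, 0 < R → 0 ≤ E R)
    (hmono : ∀ s t, 0 < s → s ≤ t → E s ≤ E t)
    (C α : ℝ) (hC : 0 < C)
    (hgrowth : ∀ R, 1 ≤ R → E R ≤ C * R ^ α)
    (κ : ℝ) (hκ : κ ∈ Set.Ioo (0:ℝ) 1) (N : ℕ → ℝ)
    (hNdiv : Tendsto (fun ℓ : ℕ => N ℓ / (ℓ : ℝ)) atTop atTop)
    (hiter : ∃ R₁ : ℝ, 1 ≤ R₁ ∧ ∀ R, R₁ ≤ R → ∀ ℓ : ℕ,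
      E R ≤ C ^ ℓ * κ ^ (N ℓ) * E (2 ^ ℓ * R)) :
    ∀ R, 0 < R → E R = 0 := by
  obtain ⟨R₁, hR₁, hiter⟩ := hiter
  have hlarge : ∀ R, R₁ ≤ R → E R = 0 := by
    intro R hR
    have hR1 : 1 ≤ R := hR₁.trans hR
    have hbound : ∀ ℓ : ℕ, E R ≤ (C * 2 ^ α) ^ ℓ * κ ^ N ℓ * (C * R ^ α) := by
      intro ℓ
      have hscaled : 1 ≤ 2 ^ ℓ * R :=
        one_le_mul_of_one_le_of_one_le (one_le_pow₀ one_le_two) hR1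
      calc E R ≤ C ^ ℓ * κ ^ N ℓ * E (2 ^ ℓ * R) := hiter R hR ℓ
        _ ≤ C ^ ℓ * κ ^ N ℓ * (C * (2 ^ ℓ * R) ^ α) :=
          mul_le_mul_of_nonneg_left (hgrowth _ hscaled)
            (mul_nonneg (by positivity) (rpow_nonneg hκ.1.le _))
        _ = (C * 2 ^ α) ^ ℓ * κ ^ N ℓ * (C * R ^ α) := by
          rw [mul_rpow (by positivity) (by positivity), ← rpow_pow_comm zero_le_two]; ring
    have hlim := (tendsto_pow_mul_rpow_of_tendsto_div_atTop (A := C * 2 ^ α) (by positivity)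
      hκ.1 hκ.2 hNdiv).mul_const (C * R ^ α)
    rw [zero_mul] at hlim
    exact le_antisymm (ge_of_tendsto' hlim hbound) (hnonneg R (by linarith))
  intro R hR
  exact le_antisymm ((hmono R _ hR (le_max_left R R₁)).trans_eq (hlarge _ (le_max_right R R₁)))
    (hnonneg R hR)

/-- If the (nondecreasing, nonnegative) energy function has polynomial growth,
decays dyadically with arbitrarily small factor, and satisfies the iterated
estimate `E R ≤ C^ℓ κ^{N(ℓ)} E(2^ℓ R)` with `N(ℓ)/ℓ → ∞`, then it vanishes. -/
theorem stmt_8 (E : ℝ → ℝ)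
    (hnonneg : ∀ R, 0 < R → 0 ≤ E R)
    (hmono : ∀ s t, 0 < s → s ≤ t → E s ≤ E t)
    (C α : ℝ) (hC : 0 < C)
    (hgrowth : ∀ R, 1 ≤ R → E R ≤ C * R ^ α)
    (hη : ∀ η : ℝ, 0 < η → ∃ R₀ : ℝ, ∀ R, R₀ ≤ R → E R ≤ η * E (2 * R))
    (κ : ℝ) (hκ : κ ∈ Set.Ioo (0:ℝ) 1) (N : ℕ → ℝ)
    (hNdiv : Tendsto (fun ℓ : ℕ => N ℓ / (ℓ : ℝ)) atTop atTop)
    (hiter : ∃ R₁ : ℝ, 1 ≤ R₁ ∧ ∀ R, R₁ ≤ R → ∀ ℓ : ℕ,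
      E R ≤ C ^ ℓ * κ ^ (N ℓ) * E (2 ^ ℓ * R)) :
    ∀ R, 0 < R → E R = 0 :=
  stmt_8_general E hnonneg hmono C α hC hgrowth κ hκ N hNdiv hiter
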